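/- Suppose a, b, c are nonnegative reals with c^s ≤ a^s + b^s for some 0 < s, and b^s ≥ k·a^s for some real k ≥ 1, with a > 0. Then for all β ≥ max{1, s}, c^β ≤ (1/2)^(β/s)·a^β + ((1+k)^(β/s) - (1/2)^(β/s))/k^(β/s)·b^β. -/

import Mathlib

/-!
With `x = a^s`, `y = b^s` and `t = β/s ≥ 1`, monotonicity of the rpow reduces the claim to
`(x + y)^t ≤ c x^t + ((1 + k)^t - c) / k^t · y^t` for `c = (1/2)^t ≤ 1` and `k x ≤ y`.
For `c ≤ 1` the map `x ↦ (x + y)^t - c x^t` is increasing on `[0, ∞)` (its derivative is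
`t ((x + y)^(t-1) - c x^(t-1)) ≥ 0`), so its value at `x` is at most its value at `x = y / k`,
which is exactly `((1 + k)^t - c) / k^t · y^t`.
-/

open Set

theorem monotoneOn_add_rpow_sub_mul_rpow {t c y : ℝ} (ht : 1 ≤ t) (hc : c ≤ 1) (hy : 0 ≤ y) :
    MonotoneOn (fun x : ℝ => (x + y) ^ t - c * x ^ t) (Ici 0) := by
  have hderiv : ∀ x : ℝ, HasDerivAt (fun x : ℝ => (x + y) ^ t - c * x ^ t)
      (1 * t * (x + y) ^ (t - 1) - c * (1 * t * x ^ (t - 1))) x := fun x =>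
    (((hasDerivAt_id x).add_const y).rpow_const (Or.inr ht)).sub
      (((hasDerivAt_id x).rpow_const (Or.inr ht)).const_mul c)
  refine monotoneOn_of_hasDerivWithinAt_nonneg (convex_Ici 0)
    (fun x _ => (hderiv x).continuousAt.continuousWithinAt)
    (fun x _ => (hderiv x).hasDerivWithinAt) fun x hx => ?_
  rw [interior_Ici, mem_Ioi] at hx
  have hpow : c * x ^ (t - 1) ≤ (x + y) ^ (t - 1) :=
    calc c * x ^ (t - 1) ≤ x ^ (t - 1) := mul_le_of_le_one_left (by positivity) hc
      _ ≤ (x + y) ^ (t - 1) := Real.rpow_le_rpow hx.le (by linarith) (by linarith)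
  nlinarith

theorem add_rpow_le_of_mul_le {t c k x y : ℝ} (ht : 1 ≤ t) (hc : c ≤ 1) (hk : 0 < k)
    (hx : 0 ≤ x) (hxy : k * x ≤ y) :
    (x + y) ^ t ≤ c * x ^ t + ((1 + k) ^ t - c) / k ^ t * y ^ t := by
  have hy : 0 ≤ y := le_trans (by positivity) hxy
  have hxk : x ≤ y / k := by rwa [le_div_iff₀ hk, mul_comm]
  have hmono := monotoneOn_add_rpow_sub_mul_rpow ht hc hy hx (div_nonneg hy hk.le) hxk
  have hend : (y / k + y) ^ t - c * (y / k) ^ t = ((1 + k) ^ t - c) / k ^ t * y ^ t := by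
    rw [show y / k + y = y * (1 + k) / k by field_simp,
      Real.div_rpow (by positivity) hk.le, Real.div_rpow hy hk.le,
      Real.mul_rpow hy (by positivity)]
    ring
  simp only at hmono
  linarith

theorem polygamy_core (a b c s k β : ℝ) (ha : 0 < a) (hb : 0 ≤ b) (hc : 0 ≤ c)
    (hs : 0 < s) (hcs : c ^ s ≤ a ^ s + b ^ s)
    (hk : 1 ≤ k) (hba : b ^ s ≥ k * a ^ s)
    (hβ : max 1 s ≤ β) :
    c ^ β ≤ (1 / 2 : ℝ) ^ (β / s) * a ^ β +
      ((1 + k) ^ (β / s) - (1 / 2 : ℝ) ^ (β / s)) / k ^ (β / s) * b ^ β := by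
  have ht : 1 ≤ β / s := (one_le_div hs).mpr (le_of_max_le_right hβ)
  have hpow : ∀ x : ℝ, 0 ≤ x → (x ^ s) ^ (β / s) = x ^ β := fun x hx => by
    rw [← Real.rpow_mul hx, mul_div_cancel₀ _ hs.ne']
  rw [← hpow c hc, ← hpow a ha.le, ← hpow b hb]
  calc (c ^ s) ^ (β / s) ≤ (a ^ s + b ^ s) ^ (β / s) :=
        Real.rpow_le_rpow (by positivity) hcs (by linarith)
    _ ≤ _ := add_rpow_le_of_mul_le ht (Real.rpow_le_one (by norm_num) (by norm_num) (by linarith))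
        (by linarith) (by positivity) hba
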